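/- arXiv:0812.4167 — 2 statements merged into one kernel-verified Lean document; each statement's English description precedes it below -/
import Mathlib

section
/- For any operator C on H = H_A ⊗ H_B with operator Schmidt coefficients {μ_a}_{a=1}^{d}, the computable cross norm of C equals the sum of its Schmidt coefficients: ‖C‖_CCN = Σ_{a=1}^{d} μ_a. Equivalently, ‖C‖_CCN equals the trace norm ‖C̃‖_tr = tr(√(C̃† C̃)) of the coefficient matrix C̃_{aα} = ⟨F_a^A ⊗ F_α^B, C⟩_HS, for any choice of Hilbert-Schmidt-orthonormal bases {F_a^A} of L(H_A) and {F_α^B} of L(H_B). -/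
/-!
For any decomposition `C = ∑ₖ Aₖ ⊗ Bₖ`, each Schmidt coefficient is
`μₐ = ⟨Eₐ ⊗ Fₐ, C⟩ = ∑ₖ ⟨Eₐ, Aₖ⟩⟨Fₐ, Bₖ⟩`, so Cauchy–Schwarz followed by Bessel's inequality
for the orthonormal families `E` and `F` gives `∑ₐ μₐ ≤ ∑ₖ ‖Aₖ‖ ‖Bₖ‖`; the Schmidt decomposition
itself attains the bound. Expanding `C` in the complete bases `FA ⊗ FB` writes the coefficient
matrix as `C̃ = U diag(μ) V†` with isometries `U`, `V` (by Parseval), so `√(C̃†C̃) = V diag(μ) V†`,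
whose trace is `∑ₐ μₐ`.
-/

open scoped Kronecker ComplexOrder
open Matrix Finset

/-- Hilbert-Schmidt inner product on matrices. -/
noncomputable def hsInner {n : Type*} [Fintype n] (A B : Matrix n n ℂ) : ℂ :=
  (Aᴴ * B).trace

/-- Hilbert-Schmidt norm. -/
noncomputable def hsNorm {n : Type*} [Fintype n] (A : Matrix n n ℂ) : ℝ :=
  Real.sqrt (hsInner A A).re

/-- The computable cross norm (CCN) on bipartite operators. -/
noncomputable def ccn {NA NB : ℕ} (C : Matrix (Fin NA × Fin NB) (Fin NA × Fin NB) ℂ) : ℝ :=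
  sInf { r : ℝ | ∃ (n : ℕ) (A : Fin n → Matrix (Fin NA) (Fin NA) ℂ)
    (B : Fin n → Matrix (Fin NB) (Fin NB) ℂ),
    C = ∑ k, A k ⊗ₖ B k ∧ r = ∑ k, hsNorm (A k) * hsNorm (B k) }

/-- An operator Schmidt decomposition of a bipartite operator `C`:
`C = ∑ a, μ a • (E a ⊗ₖ F a)` with `μ a ≥ 0` and `E`, `F` orthonormal families
with respect to the Hilbert-Schmidt inner product. -/
def SchmidtDecomp {NA NB : ℕ} (C : Matrix (Fin NA × Fin NB) (Fin NA × Fin NB) ℂ)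
    (μ : Fin (min (NA ^ 2) (NB ^ 2)) → ℝ)
    (E : Fin (min (NA ^ 2) (NB ^ 2)) → Matrix (Fin NA) (Fin NA) ℂ)
    (F : Fin (min (NA ^ 2) (NB ^ 2)) → Matrix (Fin NB) (Fin NB) ℂ) : Prop :=
  (∀ a, 0 ≤ μ a) ∧
  (∀ a b, hsInner (E a) (E b) = if a = b then 1 else 0) ∧
  (∀ a b, hsInner (F a) (F b) = if a = b then 1 else 0) ∧
  C = ∑ a, (μ a : ℂ) • (E a ⊗ₖ F a)

open scoped InnerProductSpace

section HilbertSchmidt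

variable {n m : Type*} [Fintype n] [Fintype m]

noncomputable def hsVec (A : Matrix n n ℂ) : EuclideanSpace ℂ (n × n) :=
  WithLp.toLp 2 fun p => A p.1 p.2

theorem hsInner_eq_sum (A B : Matrix n n ℂ) :
    hsInner A B = ∑ p : n × n, star (A p.1 p.2) * B p.1 p.2 := by
  rw [hsInner, trace, Fintype.sum_prod_type]
  simp only [diag_apply, mul_apply, conjTranspose_apply]
  exact sum_comm

theorem inner_hsVec (A B : Matrix n n ℂ) : ⟪hsVec A, hsVec B⟫_ℂ = hsInner A B := by
  simp [hsVec, hsInner_eq_sum, PiLp.inner_apply, mul_comm]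

theorem norm_hsVec (A : Matrix n n ℂ) : ‖hsVec A‖ = hsNorm A := by
  rw [hsNorm, ← inner_hsVec, norm_eq_sqrt_re_inner (𝕜 := ℂ)]
  rfl

theorem hsNorm_nonneg (A : Matrix n n ℂ) : 0 ≤ hsNorm A :=
  Real.sqrt_nonneg _

theorem hsNorm_smul (c : ℂ) (A : Matrix n n ℂ) : hsNorm (c • A) = ‖c‖ * hsNorm A := by
  rw [← norm_hsVec, ← norm_hsVec, ← norm_smul]
  rfl

theorem star_hsInner (A B : Matrix n n ℂ) : star (hsInner A B) = hsInner B A := by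
  rw [← inner_hsVec, ← inner_hsVec, Complex.star_def, inner_conj_symm]

theorem hsInner_smul_right (c : ℂ) (A B : Matrix n n ℂ) :
    hsInner A (c • B) = c * hsInner A B := by
  rw [hsInner, hsInner, Matrix.mul_smul, trace_smul, smul_eq_mul]

theorem hsInner_sum_right {ι : Type*} (s : Finset ι) (A : Matrix n n ℂ) (B : ι → Matrix n n ℂ) :
    hsInner A (∑ k ∈ s, B k) = ∑ k ∈ s, hsInner A (B k) := by
  simp only [hsInner, mul_sum, trace_sum]

theorem hsInner_kronecker (X Z : Matrix n n ℂ) (Y W : Matrix m m ℂ) :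
    hsInner (X ⊗ₖ Y) (Z ⊗ₖ W) = hsInner X Z * hsInner Y W := by
  rw [hsInner, conjTranspose_kronecker, ← mul_kronecker_mul, trace_kronecker, hsInner, hsInner]

theorem orthonormal_hsVec_iff {ι : Type*} [DecidableEq ι] {G : ι → Matrix n n ℂ} :
    Orthonormal ℂ (hsVec ∘ G) ↔ ∀ a b, hsInner (G a) (G b) = if a = b then 1 else 0 := by
  simp only [orthonormal_iff_ite, Function.comp_apply, inner_hsVec]

theorem hsNorm_eq_one_of_orthonormal {ι : Type*} {G : ι → Matrix n n ℂ}
    (hG : Orthonormal ℂ (hsVec ∘ G)) (a : ι) : hsNorm (G a) = 1 :=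
  norm_hsVec (G a) ▸ hG.1 a

end HilbertSchmidt

section OrthonormalFamilies

variable {n m ι : Type*} [Fintype n] [Fintype m] [Fintype ι]

theorem sqrt_sum_norm_hsInner_sq_le {G : ι → Matrix n n ℂ} (hG : Orthonormal ℂ (hsVec ∘ G))
    (A : Matrix n n ℂ) : √(∑ a, ‖hsInner (G a) A‖ ^ 2) ≤ hsNorm A := by
  have bessel := hG.sum_inner_products_le (s := univ) (hsVec A)
  simp only [Function.comp_apply, inner_hsVec, norm_hsVec] at bessel
  exact (Real.sqrt_le_sqrt bessel).trans_eq (Real.sqrt_sq (hsNorm_nonneg A))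

theorem sum_norm_hsInner_mul_norm_hsInner_le {E : ι → Matrix n n ℂ} {F : ι → Matrix m m ℂ}
    (hE : Orthonormal ℂ (hsVec ∘ E)) (hF : Orthonormal ℂ (hsVec ∘ F))
    (A : Matrix n n ℂ) (B : Matrix m m ℂ) :
    ∑ a, ‖hsInner (E a) A‖ * ‖hsInner (F a) B‖ ≤ hsNorm A * hsNorm B :=
  (Real.sum_mul_le_sqrt_mul_sqrt _ _ _).trans <|
    mul_le_mul (sqrt_sum_norm_hsInner_sq_le hE A) (sqrt_sum_norm_hsInner_sq_le hF B)
      (Real.sqrt_nonneg _) (hsNorm_nonneg A)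

theorem hsInner_kronecker_sum_smul_kronecker [DecidableEq ι] {E : ι → Matrix n n ℂ}
    {F : ι → Matrix m m ℂ} (hE : Orthonormal ℂ (hsVec ∘ E)) (hF : Orthonormal ℂ (hsVec ∘ F))
    (μ : ι → ℂ) (a : ι) : hsInner (E a ⊗ₖ F a) (∑ b, μ b • (E b ⊗ₖ F b)) = μ a := by
  simp only [hsInner_sum_right, hsInner_smul_right, hsInner_kronecker,
    orthonormal_hsVec_iff.1 hE, orthonormal_hsVec_iff.1 hF]
  simp

theorem sum_le_sum_hsNorm_mul_hsNorm {κ : Type*} [Fintype κ]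
    {C : Matrix (n × m) (n × m) ℂ} {μ : ι → ℝ} {E : ι → Matrix n n ℂ} {F : ι → Matrix m m ℂ}
    (hE : Orthonormal ℂ (hsVec ∘ E)) (hF : Orthonormal ℂ (hsVec ∘ F))
    (hC : C = ∑ a, (μ a : ℂ) • (E a ⊗ₖ F a))
    {A : κ → Matrix n n ℂ} {B : κ → Matrix m m ℂ} (hAB : C = ∑ k, A k ⊗ₖ B k) :
    ∑ a, μ a ≤ ∑ k, hsNorm (A k) * hsNorm (B k) := by
  classical
  have hμ (a : ι) : (μ a : ℂ) = ∑ k, hsInner (E a) (A k) * hsInner (F a) (B k) := by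
    rw [← hsInner_kronecker_sum_smul_kronecker hE hF (fun b => (μ b : ℂ)) a, ← hC, hAB,
      hsInner_sum_right]
    simp only [hsInner_kronecker]
  calc ∑ a, μ a ≤ ∑ a, ∑ k, ‖hsInner (E a) (A k)‖ * ‖hsInner (F a) (B k)‖ := by
        refine sum_le_sum fun a _ => ?_
        calc μ a ≤ ‖(μ a : ℂ)‖ := by simpa using le_abs_self (μ a)
          _ ≤ _ := by rw [hμ]; exact (norm_sum_le _ _).trans_eq (by simp only [norm_mul])
    _ = ∑ k, ∑ a, ‖hsInner (E a) (A k)‖ * ‖hsInner (F a) (B k)‖ := sum_comm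
    _ ≤ ∑ k, hsNorm (A k) * hsNorm (B k) :=
        sum_le_sum fun k _ => sum_norm_hsInner_mul_norm_hsInner_le hE hF _ _

end OrthonormalFamilies

theorem ccn_eq_sum_of_schmidtDecomp {NA NB : ℕ} {C : Matrix (Fin NA × Fin NB) (Fin NA × Fin NB) ℂ}
    {μ : Fin (min (NA ^ 2) (NB ^ 2)) → ℝ}
    {E : Fin (min (NA ^ 2) (NB ^ 2)) → Matrix (Fin NA) (Fin NA) ℂ}
    {F : Fin (min (NA ^ 2) (NB ^ 2)) → Matrix (Fin NB) (Fin NB) ℂ}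
    (hS : SchmidtDecomp C μ E F) : ccn C = ∑ a, μ a := by
  obtain ⟨hμ, hE, hF, hC⟩ := hS
  rw [← orthonormal_hsVec_iff] at hE hF
  refine IsLeast.csInf_eq ⟨⟨_, fun a => (μ a : ℂ) • E a, F, ?_, ?_⟩, ?_⟩
  · simp only [hC, smul_kronecker]
  · refine sum_congr rfl fun a _ => ?_
    rw [hsNorm_smul, hsNorm_eq_one_of_orthonormal hE, hsNorm_eq_one_of_orthonormal hF,
      Complex.norm_real, Real.norm_of_nonneg (hμ a), mul_one, mul_one]
  · rintro r ⟨k, A, B, hAB, rfl⟩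
    exact sum_le_sum_hsNorm_mul_hsNorm hE hF hC hAB

section CompleteFamilies

variable {n ι κ : Type*} [Fintype n] [Fintype ι]

theorem sum_hsInner_mul_hsInner {G : ι → Matrix n n ℂ} (hG : Orthonormal ℂ (hsVec ∘ G))
    (hcard : Fintype.card ι = Fintype.card (n × n)) (X Y : Matrix n n ℂ) :
    ∑ a, hsInner X (G a) * hsInner (G a) Y = hsInner X Y := by
  have hspan := hG.linearIndependent.span_eq_top_of_card_eq_finrank'
    (hcard.trans (finrank_euclideanSpace (𝕜 := ℂ)).symm)
  simpa only [OrthonormalBasis.coe_mk, Function.comp_apply, inner_hsVec] using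
    (OrthonormalBasis.mk hG hspan.ge).sum_inner_mul_inner (hsVec X) (hsVec Y)

noncomputable def hsCoeff (G : ι → Matrix n n ℂ) (E : κ → Matrix n n ℂ) : Matrix ι κ ℂ :=
  Matrix.of fun a b => hsInner (G a) (E b)

theorem hsCoeff_conjTranspose_mul_self [DecidableEq κ] {G : ι → Matrix n n ℂ}
    (hG : Orthonormal ℂ (hsVec ∘ G)) (hcard : Fintype.card ι = Fintype.card (n × n))
    {E : κ → Matrix n n ℂ} (hE : Orthonormal ℂ (hsVec ∘ E)) :
    (hsCoeff G E)ᴴ * hsCoeff G E = 1 := by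
  ext b c
  simp only [mul_apply, conjTranspose_apply, hsCoeff, of_apply, star_hsInner]
  rw [sum_hsInner_mul_hsInner hG hcard, orthonormal_hsVec_iff.1 hE, one_apply]

end CompleteFamilies

theorem conjTranspose_map_star_mul_map_star {m l : Type*} [Fintype m] [DecidableEq l]
    {U : Matrix m l ℂ} (hU : Uᴴ * U = 1) : (U.map star)ᴴ * U.map star = 1 := by
  rw [← conjTranspose_map star fun _ => rfl, Complex.star_def, ← Matrix.map_mul, hU,
    Matrix.map_one _ (map_zero _) (map_one _)]

section TraceNorm

open scoped MatrixOrder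

variable {l m n : Type*} [Fintype l] [Fintype m] [Fintype n] [DecidableEq n]

theorem trace_cfcSqrt_eq_sum_sqrt_eigenvalues {M : Matrix n n ℂ} (hM : M.PosSemidef) :
    (CFC.sqrt M).trace = ∑ i, (√(hM.1.eigenvalues i) : ℂ) := by
  rw [CFC.sqrt_eq_cfc, cfc_nnreal_eq_real _ M hM.nonneg, hM.1.cfc_eq, IsHermitian.cfc,
    Unitary.conjStarAlgAut_apply, trace_mul_comm, ← Matrix.mul_assoc,
    Unitary.coe_star_mul_self, Matrix.one_mul, trace_diagonal]
  refine sum_congr rfl fun i _ => ?_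
  simp [Real.coe_sqrt, Real.coe_toNNReal', hM.eigenvalues_nonneg i]

theorem sum_sqrt_eigenvalues_conjTranspose_mul_self_of_svd [DecidableEq l]
    {U : Matrix m l ℂ} {V : Matrix n l ℂ} {d : l → ℝ} (hd : ∀ i, 0 ≤ d i)
    (hU : Uᴴ * U = 1) (hV : Vᴴ * V = 1) {M : Matrix m n ℂ}
    (hM : M = U * diagonal (fun i => (d i : ℂ)) * Vᴴ) :
    ∑ i, √((isHermitian_conjTranspose_mul_self M).eigenvalues i) = ∑ i, d i := by
  set D := diagonal fun i => (d i : ℂ)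
  have hD : D.PosSemidef := posSemidef_diagonal_iff.2 fun i => by simpa using hd i
  have hsq : (V * D * Vᴴ) * (V * D * Vᴴ) = Mᴴ * M := by
    simp only [hM, conjTranspose_mul, conjTranspose_conjTranspose, hD.1.eq, Matrix.mul_assoc]
    rw [← Matrix.mul_assoc Vᴴ V, hV, ← Matrix.mul_assoc Uᴴ U, hU, Matrix.one_mul]
  have hsqrt : CFC.sqrt (Mᴴ * M) = V * D * Vᴴ :=
    CFC.sqrt_unique hsq (hD.mul_mul_conjTranspose_same V).nonneg
  have htrace := trace_cfcSqrt_eq_sum_sqrt_eigenvalues (posSemidef_conjTranspose_mul_self M)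
  rw [hsqrt, trace_mul_cycle, hV, Matrix.one_mul, trace_diagonal] at htrace
  exact_mod_cast htrace.symm

end TraceNorm

theorem stmt7_ccn_eq_sum_schmidt_coefficients_general {NA NB : ℕ}
    (C : Matrix (Fin NA × Fin NB) (Fin NA × Fin NB) ℂ)
    (μ : Fin (min (NA ^ 2) (NB ^ 2)) → ℝ)
    (E : Fin (min (NA ^ 2) (NB ^ 2)) → Matrix (Fin NA) (Fin NA) ℂ)
    (F : Fin (min (NA ^ 2) (NB ^ 2)) → Matrix (Fin NB) (Fin NB) ℂ)
    (hS : SchmidtDecomp C μ E F)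
    (FA : Fin (NA ^ 2) → Matrix (Fin NA) (Fin NA) ℂ)
    (FB : Fin (NB ^ 2) → Matrix (Fin NB) (Fin NB) ℂ)
    (hFA : ∀ a b, hsInner (FA a) (FA b) = if a = b then 1 else 0)
    (hFB : ∀ α β, hsInner (FB α) (FB β) = if α = β then 1 else 0)
    (Ct : Matrix (Fin (NA ^ 2)) (Fin (NB ^ 2)) ℂ)
    (hCt : ∀ a α, Ct a α = hsInner (FA a ⊗ₖ FB α) C) :
    ccn C = ∑ a, μ a ∧
    ccn C = ∑ α, Real.sqrt ((Matrix.isHermitian_conjTranspose_mul_self Ct).eigenvalues α) := by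
  have hccn := ccn_eq_sum_of_schmidtDecomp hS
  obtain ⟨hμ, hE, hF, hC⟩ := hS
  rw [← orthonormal_hsVec_iff] at hE hF hFA hFB
  have hcard (N : ℕ) : Fintype.card (Fin (N ^ 2)) = Fintype.card (Fin N × Fin N) := by simp [sq]
  have hU := hsCoeff_conjTranspose_mul_self hFA (hcard NA) hE
  have hV := conjTranspose_map_star_mul_map_star
    (hsCoeff_conjTranspose_mul_self hFB (hcard NB) hF)
  have hCt_svd :
      Ct = hsCoeff FA E * diagonal (fun b => (μ b : ℂ)) * ((hsCoeff FB F).map star)ᴴ := by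
    ext a α
    rw [mul_apply]
    simp only [hCt, hC, hsInner_sum_right, hsInner_smul_right, hsInner_kronecker, mul_diagonal,
      conjTranspose_apply, map_apply, star_star, hsCoeff, of_apply]
    exact sum_congr rfl fun b _ => by ring
  exact ⟨hccn,
    hccn.trans (sum_sqrt_eigenvalues_conjTranspose_mul_self_of_svd hμ hU hV hCt_svd).symm⟩

/-- The CCN of a bipartite operator equals the sum of its Schmidt coefficients, and also
equals the trace norm of its coefficient matrix with respect to any pair of
Hilbert-Schmidt-orthonormal local bases. -/
theorem stmt7_ccn_eq_sum_schmidt_coefficients {NA NB : ℕ} (hA : 2 ≤ NA) (hB : 2 ≤ NB)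
    (C : Matrix (Fin NA × Fin NB) (Fin NA × Fin NB) ℂ)
    (μ : Fin (min (NA ^ 2) (NB ^ 2)) → ℝ)
    (E : Fin (min (NA ^ 2) (NB ^ 2)) → Matrix (Fin NA) (Fin NA) ℂ)
    (F : Fin (min (NA ^ 2) (NB ^ 2)) → Matrix (Fin NB) (Fin NB) ℂ)
    (hS : SchmidtDecomp C μ E F)
    (FA : Fin (NA ^ 2) → Matrix (Fin NA) (Fin NA) ℂ)
    (FB : Fin (NB ^ 2) → Matrix (Fin NB) (Fin NB) ℂ)
    (hFA : ∀ a b, hsInner (FA a) (FA b) = if a = b then 1 else 0)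
    (hFB : ∀ α β, hsInner (FB α) (FB β) = if α = β then 1 else 0)
    (Ct : Matrix (Fin (NA ^ 2)) (Fin (NB ^ 2)) ℂ)
    (hCt : ∀ a α, Ct a α = hsInner (FA a ⊗ₖ FB α) C) :
    ccn C = ∑ a, μ a ∧
    ccn C = ∑ α, Real.sqrt ((Matrix.isHermitian_conjTranspose_mul_self Ct).eigenvalues α) :=
  stmt7_ccn_eq_sum_schmidt_coefficients_general C μ E F hS FA FB hFA hFB Ct hCt
end

section
/- If ρ is a separable state on H = H_A ⊗ H_B with operator Schmidt coefficients {μ_a}_{a=1}^{d}, then for every 1 ≤ l ≤ d the elementary symmetric polynomial of degree l in the Schmidt coefficients satisfies M^[l](|ρ̃|) = Σ_{a_1 < a_2 < … < a_l} μ_{a_1} μ_{a_2} ⋯ μ_{a_l} ≤ C(d, l) · (1/d)^l, where C(d,l) is the binomial coefficient. -/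
/-!
Writing each Schmidt coefficient as `μ a = ⟪E a ⊗ F a, ρ⟫ = ∑ i, p i ⟪E a, ρA i⟫ ⟪F a, ρB i⟫`, the
bound `|x y| ≤ (|x|² + |y|²) / 2`, Bessel's inequality and `tr ρ² ≤ (tr ρ)² = 1` for density
operators give the realignment criterion `∑ a, μ a ≤ 1`. Maclaurin's inequality
`e_l(μ) ≤ C(d, l) (∑ a, μ a / d) ^ l` then finishes. It follows by induction on `l` from
`d (l + 1) e_{l+1} ≤ (d - l) e_1 e_l`, which is Chebyshev's sum inequality for the similarly ordered
families `μ a` and `μ a * e_{l-1}(μ without a)`.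
-/

open scoped Kronecker ComplexOrder
open Matrix Finset

/-- A density operator: positive semidefinite with unit trace. -/
def IsDensity {n : Type*} [Fintype n] (ρ : Matrix n n ℂ) : Prop :=
  ρ.PosSemidef ∧ ρ.trace = 1

/-- A separable bipartite state: a convex combination of product density operators. -/
def IsSeparableState {NA NB : ℕ} (ρ : Matrix (Fin NA × Fin NB) (Fin NA × Fin NB) ℂ) : Prop :=
  ∃ (m : ℕ) (p : Fin m → ℝ)
    (ρA : Fin m → Matrix (Fin NA) (Fin NA) ℂ) (ρB : Fin m → Matrix (Fin NB) (Fin NB) ℂ),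
    (∀ i, 0 < p i) ∧ (∑ i, p i = 1) ∧ (∀ i, IsDensity (ρA i)) ∧ (∀ i, IsDensity (ρB i)) ∧
    ρ = ∑ i, (p i : ℂ) • (ρA i ⊗ₖ ρB i)

namespace Multiset

variable {R : Type*} [CommSemiring R]

theorem esymm_zero (s : Multiset R) : s.esymm 0 = 1 := by
  simp [esymm, powersetCard_zero_left]

theorem esymm_one (s : Multiset R) : s.esymm 1 = s.sum := by
  simp [esymm, powersetCard_one, map_map]

theorem esymm_cons_succ (a : R) (s : Multiset R) (k : ℕ) :
    (a ::ₘ s).esymm (k + 1) = s.esymm (k + 1) + a * s.esymm k := by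
  simp [esymm, powersetCard_cons, map_map, sum_map_mul_left]

theorem esymm_nonneg [PartialOrder R] [IsOrderedRing R] {s : Multiset R} (hs : ∀ a ∈ s, 0 ≤ a)
    (k : ℕ) : 0 ≤ s.esymm k :=
  sum_nonneg fun _ hp => by
    obtain ⟨u, hu, rfl⟩ := mem_map.1 hp
    exact prod_nonneg fun a ha => hs a (mem_of_le (mem_powersetCard.1 hu).1 ha)

end Multiset

namespace Finset

section CommSemiring

variable {ι R : Type*} [DecidableEq ι] [CommSemiring R] (x : ι → R)

theorem esymm_map_val_insert_succ {b : ι} {t : Finset ι} (hb : b ∉ t) (k : ℕ) :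
    ((insert b t).val.map x).esymm (k + 1)
      = (t.val.map x).esymm (k + 1) + x b * (t.val.map x).esymm k := by
  rw [insert_val_of_notMem hb, Multiset.map_cons, Multiset.esymm_cons_succ]

theorem esymm_map_val_succ_of_mem {a : ι} {t : Finset ι} (ha : a ∈ t) (k : ℕ) :
    (t.val.map x).esymm (k + 1)
      = ((t.erase a).val.map x).esymm (k + 1) + x a * ((t.erase a).val.map x).esymm k := by
  conv_lhs => rw [← insert_erase ha]
  exact esymm_map_val_insert_succ x (notMem_erase a t) k

theorem sum_mul_esymm_map_val_erase (t : Finset ι) (k : ℕ) :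
    ∑ a ∈ t, x a * ((t.erase a).val.map x).esymm k = (k + 1) * (t.val.map x).esymm (k + 1) := by
  induction t using Finset.induction_on generalizing k with
  | empty => simp [Multiset.esymm, Multiset.powersetCard_zero_right]
  | insert b t hb ih =>
    have herase : ∀ a ∈ t, (insert b t).erase a = insert b (t.erase a) := fun a ha =>
      erase_insert_of_ne fun hba => hb (hba ▸ ha)
    rw [sum_insert hb, erase_insert hb, sum_congr rfl fun a ha => by rw [herase a ha]]
    cases k with
    | zero =>
      simp [Multiset.esymm_zero, Multiset.esymm_one, insert_val_of_notMem hb]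
    | succ j =>
      have hb' : ∀ a ∈ t, b ∉ t.erase a := fun a _ h => hb (mem_of_mem_erase h)
      rw [sum_congr rfl fun a ha => by rw [esymm_map_val_insert_succ x (hb' a ha)]]
      simp only [mul_add, sum_add_distrib, mul_left_comm _ (x b), ← mul_sum, ih,
        esymm_map_val_insert_succ x hb (j + 1)]
      push_cast
      ring

end CommSemiring

variable {ι : Type*} [DecidableEq ι] {x : ι → ℝ}

theorem monovaryOn_mul_esymm_map_val_erase (hx : 0 ≤ x) (t : Finset ι) (k : ℕ) :
    MonovaryOn (fun a => x a * ((t.erase a).val.map x).esymm k) x t := by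
  intro i hi j hj hij
  cases k with
  | zero => simpa [Multiset.esymm_zero] using hij.le
  | succ k =>
    have hne : i ≠ j := ne_of_apply_ne x hij.ne
    dsimp only
    rw [esymm_map_val_succ_of_mem x (mem_erase.2 ⟨hne.symm, hj⟩),
      esymm_map_val_succ_of_mem x (mem_erase.2 ⟨hne, hi⟩), erase_right_comm]
    have hrest := Multiset.esymm_nonneg (s := ((t.erase j).erase i).val.map x)
      (by simpa using fun a _ => hx a) (k + 1)
    linarith [mul_le_mul_of_nonneg_right hij.le hrest]

theorem card_mul_succ_mul_esymm_map_val_le (hx : 0 ≤ x) (t : Finset ι) (k : ℕ) :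
    #t * (k + 1) * (t.val.map x).esymm (k + 1)
      ≤ (#t - k) * (∑ a ∈ t, x a) * (t.val.map x).esymm k := by
  cases k with
  | zero => simp [Multiset.esymm_zero, Multiset.esymm_one, sum_map_val]
  | succ k =>
    have hcheb := (monovaryOn_mul_esymm_map_val_erase hx t k).sum_mul_sum_le_card_mul_sum
    rw [sum_mul_esymm_map_val_erase] at hcheb
    have hsplit : (∑ a ∈ t, x a) * (t.val.map x).esymm (k + 1)
        = ∑ a ∈ t, x a * ((t.erase a).val.map x).esymm (k + 1)
          + ∑ a ∈ t, x a * ((t.erase a).val.map x).esymm k * x a := by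
      rw [sum_mul, ← sum_add_distrib]
      refine sum_congr rfl fun a ha => ?_
      rw [esymm_map_val_succ_of_mem x ha]
      ring
    rw [sum_mul_esymm_map_val_erase] at hsplit
    push_cast at hsplit ⊢
    linear_combination hcheb - (#t : ℝ) * hsplit

theorem esymm_map_val_le_choose_mul_pow (hx : 0 ≤ x) {t : Finset ι} {l : ℕ} (hl : l ≤ #t) :
    (t.val.map x).esymm l ≤ (#t).choose l * ((∑ a ∈ t, x a) / #t) ^ l := by
  induction l with
  | zero => simp [Multiset.esymm_zero]
  | succ l ih =>
    set S := ∑ a ∈ t, x a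
    have hn : (0 : ℝ) < #t := by exact_mod_cast (Nat.succ_pos l).trans_le hl
    have hS : 0 ≤ S := sum_nonneg fun a _ => hx a
    have hchoose : ((#t).choose (l + 1) : ℝ) * (l + 1) = (#t).choose l * (#t - l) := by
      have h := congrArg (Nat.cast : ℕ → ℝ) (Nat.choose_succ_right_eq (#t) l)
      push_cast [Nat.cast_sub (by omega : l ≤ #t)] at h
      exact h
    refine le_of_mul_le_mul_left ?_ (by positivity : (0 : ℝ) < #t * (l + 1))
    calc #t * (l + 1) * (t.val.map x).esymm (l + 1)
        ≤ (#t - l) * S * (t.val.map x).esymm l := card_mul_succ_mul_esymm_map_val_le hx t l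
      _ ≤ (#t - l) * S * ((#t).choose l * (S / #t) ^ l) := by
        have hlt : (l : ℝ) ≤ #t := by exact_mod_cast hl.trans' l.le_succ
        gcongr
        exact ih (by omega)
      _ = #t * (l + 1) * ((#t).choose (l + 1) * (S / #t) ^ (l + 1)) := by
        have hSn : (#t : ℝ) * (S / #t) = S := mul_div_cancel₀ _ hn.ne'
        linear_combination -(S * (S / #t) ^ l) * hchoose
          - ((l + 1) * (#t).choose (l + 1) * (S / #t) ^ l) * hSn

end Finset

theorem Matrix.PosSemidef.norm_sq_apply_le {n : Type*} {A : Matrix n n ℂ}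
    (hA : A.PosSemidef) (i j : n) : ‖A i j‖ ^ 2 ≤ (A i i).re * (A j j).re := by
  have hdet := (hA.submatrix ![i, j]).det_nonneg
  rw [det_fin_two] at hdet
  simp only [submatrix_apply, cons_val_zero, cons_val_one] at hdet
  rw [← hA.1.apply j i, Complex.nonneg_iff] at hdet
  have hi := (Complex.nonneg_iff.1 (hA.diag_nonneg (i := i))).2
  have hj := (Complex.nonneg_iff.1 (hA.diag_nonneg (i := j))).2
  simp [Complex.sq_norm, Complex.normSq_apply] at hdet ⊢
  nlinarith [hdet.1]

section HilbertSchmidt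

variable {n : Type*} [Fintype n]

theorem inner_toLp_uncurry_eq_hsInner (A B : Matrix n n ℂ) :
    inner ℂ (WithLp.toLp 2 (Function.uncurry A)) (WithLp.toLp 2 (Function.uncurry B))
      = hsInner A B := by
  simp [hsInner, PiLp.inner_apply, trace, mul_apply, Fintype.sum_prod_type, mul_comm]
  exact sum_comm

theorem hsInner_sum_smul {κ : Type*} (s : Finset κ) (c : κ → ℂ) (A : Matrix n n ℂ)
    (B : κ → Matrix n n ℂ) :
    hsInner A (∑ i ∈ s, c i • B i) = ∑ i ∈ s, c i * hsInner A (B i) := by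
  simp [hsInner, Matrix.mul_sum, trace_sum]

theorem sum_norm_sq_hsInner_le {ι : Type*} [Fintype ι] [DecidableEq ι]
    (E : ι → Matrix n n ℂ) (hE : ∀ a b, hsInner (E a) (E b) = if a = b then 1 else 0)
    (A : Matrix n n ℂ) :
    ∑ a, ‖hsInner (E a) A‖ ^ 2 ≤ (hsInner A A).re := by
  have hon : Orthonormal ℂ fun a => WithLp.toLp 2 (Function.uncurry (E a)) :=
    orthonormal_iff_ite.2 fun a b => by rw [inner_toLp_uncurry_eq_hsInner, hE]
  have h := hon.sum_inner_products_le (x := WithLp.toLp 2 (Function.uncurry A)) (s := univ)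
  rw [@norm_sq_eq_re_inner ℂ] at h
  simpa only [inner_toLp_uncurry_eq_hsInner, RCLike.re_to_complex] using h

theorem Matrix.PosSemidef.re_hsInner_self_le {A : Matrix n n ℂ} (hA : A.PosSemidef) :
    (hsInner A A).re ≤ A.trace.re ^ 2 := by
  calc (hsInner A A).re = ∑ i, ∑ j, ‖A j i‖ ^ 2 := by
        simp [hsInner, trace, mul_apply, Complex.sq_norm, Complex.normSq_apply]
    _ ≤ ∑ i, ∑ j, (A j j).re * (A i i).re :=
        sum_le_sum fun i _ => sum_le_sum fun j _ => hA.norm_sq_apply_le j i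
    _ = A.trace.re ^ 2 := by
        simp [trace, ← sum_mul, ← mul_sum, sq]

theorem IsDensity.re_hsInner_self_le_one {ρ : Matrix n n ℂ} (hρ : IsDensity ρ) :
    (hsInner ρ ρ).re ≤ 1 := by
  simpa [hρ.2] using hρ.1.re_hsInner_self_le

end HilbertSchmidt

theorem hsInner_kronecker_s10 {m n : Type*} [Fintype m] [Fintype n] (A C : Matrix m m ℂ)
    (B D : Matrix n n ℂ) : hsInner (A ⊗ₖ B) (C ⊗ₖ D) = hsInner A C * hsInner B D := by
  rw [hsInner, conjTranspose_kronecker, ← mul_kronecker_mul, trace_kronecker]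
  rfl

section Realignment

variable {NA NB : ℕ} {ρ : Matrix (Fin NA × Fin NB) (Fin NA × Fin NB) ℂ}
  {μ : Fin (min (NA ^ 2) (NB ^ 2)) → ℝ}
  {E : Fin (min (NA ^ 2) (NB ^ 2)) → Matrix (Fin NA) (Fin NA) ℂ}
  {F : Fin (min (NA ^ 2) (NB ^ 2)) → Matrix (Fin NB) (Fin NB) ℂ}

theorem SchmidtDecomp.ofReal_eq_hsInner (hS : SchmidtDecomp ρ μ E F)
    (a : Fin (min (NA ^ 2) (NB ^ 2))) :
    (μ a : ℂ) = hsInner (E a ⊗ₖ F a) ρ := by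
  obtain ⟨-, hE, hF, rfl⟩ := hS
  rw [hsInner_sum_smul]
  simp [hsInner_kronecker_s10, hE, hF]

theorem IsSeparableState.sum_le_one_of_schmidtDecomp (hsep : IsSeparableState ρ)
    (hS : SchmidtDecomp ρ μ E F) : ∑ a, μ a ≤ 1 := by
  obtain ⟨m, p, ρA, ρB, hp, hp1, hρA, hρB, rfl⟩ := hsep
  set c : Fin m → _ → ℂ := fun i a => hsInner (E a) (ρA i)
  set d : Fin m → _ → ℂ := fun i a => hsInner (F a) (ρB i)
  have hc i : ∑ a, ‖c i a‖ ^ 2 ≤ 1 :=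
    (sum_norm_sq_hsInner_le E hS.2.1 _).trans (hρA i).re_hsInner_self_le_one
  have hd i : ∑ a, ‖d i a‖ ^ 2 ≤ 1 :=
    (sum_norm_sq_hsInner_le F hS.2.2.1 _).trans (hρB i).re_hsInner_self_le_one
  have hμ a : μ a ≤ ∑ i, p i * ((‖c i a‖ ^ 2 + ‖d i a‖ ^ 2) / 2) := by
    have h : (μ a : ℂ) = ∑ i, p i * (c i a * d i a) := by
      rw [hS.ofReal_eq_hsInner, hsInner_sum_smul]
      simp [c, d, hsInner_kronecker_s10]
    calc μ a ≤ ‖(μ a : ℂ)‖ := by simp [le_abs_self]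
      _ ≤ ∑ i, p i * (‖c i a‖ * ‖d i a‖) := by
        rw [h]
        refine (norm_sum_le _ _).trans (le_of_eq ?_)
        simp [abs_of_pos (hp _)]
      _ ≤ _ := by
        gcongr with i
        · exact (hp i).le
        · nlinarith [two_mul_le_add_sq ‖c i a‖ ‖d i a‖]
  calc ∑ a, μ a ≤ ∑ a, ∑ i, p i * ((‖c i a‖ ^ 2 + ‖d i a‖ ^ 2) / 2) :=
        sum_le_sum fun a _ => hμ a
    _ = ∑ i, p i * ((∑ a, ‖c i a‖ ^ 2 + ∑ a, ‖d i a‖ ^ 2) / 2) := by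
      rw [sum_comm]
      simp only [← mul_sum, ← sum_div, sum_add_distrib]
    _ ≤ ∑ i, p i * 1 := by
      gcongr with i
      · exact (hp i).le
      · linarith [hc i, hd i]
    _ = 1 := by simpa using hp1

end Realignment

theorem stmt10_esymm_schmidt_coefficients_bound_general {NA NB : ℕ}
    (ρ : Matrix (Fin NA × Fin NB) (Fin NA × Fin NB) ℂ)
    (hsep : IsSeparableState ρ)
    (μ : Fin (min (NA ^ 2) (NB ^ 2)) → ℝ)
    (E : Fin (min (NA ^ 2) (NB ^ 2)) → Matrix (Fin NA) (Fin NA) ℂ)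
    (F : Fin (min (NA ^ 2) (NB ^ 2)) → Matrix (Fin NB) (Fin NB) ℂ)
    (hS : SchmidtDecomp ρ μ E F) :
    ∀ l : ℕ, 1 ≤ l → l ≤ min (NA ^ 2) (NB ^ 2) →
      ∑ s ∈ Finset.univ.powersetCard l, ∏ a ∈ s, μ a
        ≤ ((min (NA ^ 2) (NB ^ 2)).choose l : ℝ)
          * (1 / (min (NA ^ 2) (NB ^ 2) : ℝ)) ^ l := by
  intro l _ hl
  have hmaclaurin := esymm_map_val_le_choose_mul_pow (t := univ) hS.1 (by simpa using hl)
  rw [esymm_map_val, card_univ, Fintype.card_fin] at hmaclaurin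
  have hcast : ((min (NA ^ 2) (NB ^ 2) : ℕ) : ℝ) = min ((NA : ℝ) ^ 2) ((NB : ℝ) ^ 2) := by
    push_cast; rfl
  rw [← hcast]
  refine hmaclaurin.trans ?_
  gcongr
  · exact div_nonneg (sum_nonneg fun a _ => hS.1 a) (Nat.cast_nonneg _)
  · exact hsep.sum_le_one_of_schmidtDecomp hS

/-- For a separable state, the elementary symmetric polynomial of degree l in the Schmidt
coefficients is at most C(d,l)·(1/d)^l. -/
theorem stmt10_esymm_schmidt_coefficients_bound {NA NB : ℕ} (hA : 2 ≤ NA) (hB : 2 ≤ NB)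
    (ρ : Matrix (Fin NA × Fin NB) (Fin NA × Fin NB) ℂ)
    (hsep : IsSeparableState ρ)
    (μ : Fin (min (NA ^ 2) (NB ^ 2)) → ℝ)
    (E : Fin (min (NA ^ 2) (NB ^ 2)) → Matrix (Fin NA) (Fin NA) ℂ)
    (F : Fin (min (NA ^ 2) (NB ^ 2)) → Matrix (Fin NB) (Fin NB) ℂ)
    (hS : SchmidtDecomp ρ μ E F) :
    ∀ l : ℕ, 1 ≤ l → l ≤ min (NA ^ 2) (NB ^ 2) →
      ∑ s ∈ Finset.univ.powersetCard l, ∏ a ∈ s, μ a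
        ≤ ((min (NA ^ 2) (NB ^ 2)).choose l : ℝ)
          * (1 / (min (NA ^ 2) (NB ^ 2) : ℝ)) ^ l :=
  stmt10_esymm_schmidt_coefficients_bound_general ρ hsep μ E F hS
end
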